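/- Let β be a positive integer, r a positive integer, and 0 < λ₁ ≤ λ₂. Let v : ℝ → ℝ be C^{r+1} with v(x + 2πβ) = v(x) + 2π for all x, with λ₂⁻¹ ≤ v'(x) ≤ λ₁⁻¹ for all x, and with sup_x |v^{(n+1)}(x)/v'(x)| ≤ C_n < ∞ for n = 1,…,r. For j,k ∈ ℤ define L_{jk} = (1/2π) ∫₀^{2πβ} v'(x) e^{i(k v(x) − j x)} dx. Then: (i) for every p₁ > λ₁⁻¹ there exists C > 0 such that |L_{jk}| ≤ C (1 + |j − p₁ k|)^{−r} whenever k = 0 or j/k > p₁; and (ii) for every p₂ ∈ (0, λ₂⁻¹) there exists C' > 0 such that |L_{jk}| ≤ C' (1 + |j − p₂ k|)^{−r} whenever k = 0 or j/k < p₂. -/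

import Mathlib

/-!
Write `φ = k v - j x` for the phase and `ψ = φ' = k v' - j`. In either region `v' - p` and
`k (j - p k)` have opposite signs, whence `|ψ| ≥ δ |k| + |j - p k|` with `δ = p₁ - λ₁⁻¹`
(resp. `λ₂⁻¹ - p₂`). So for `(j, k) ≠ 0` the function `ψ` never vanishes, `|ψ| ≳ 1 + |j - p k|`,
and (DD_r) turns into `|ψ^{(m)}| = |k| |v^{(m+1)}| ≤ K |ψ|` with `K` independent of `(j, k)`.
Since `v'` is `2πβ`-periodic and `e^{iφ}` returns to its initial value after one period, the
integration by parts `∫ g e^{iφ} = i ∫ (g / ψ)' e^{iφ}` produces no boundary terms; after `r` of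
them the Leibniz rule bounds the integrand by a constant times `|ψ|^{-r}`.
-/

open Finset

theorem abs_iteratedDeriv_mul_le {n : ℕ} {f g : ℝ → ℝ} (hf : ContDiff ℝ n f)
    (hg : ContDiff ℝ n g) {x a b : ℝ} (ha : ∀ i ≤ n, |iteratedDeriv i f x| ≤ a)
    (hb : ∀ i ≤ n, |iteratedDeriv i g x| ≤ b) :
    |iteratedDeriv n (fun y => f y * g y) x| ≤ 2 ^ n * a * b := by
  have hleibniz := norm_iteratedFDeriv_mul_le hf hg x le_rfl
  simp only [norm_iteratedFDeriv_eq_norm_iteratedDeriv, Real.norm_eq_abs] at hleibniz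
  have ha0 : 0 ≤ a := (abs_nonneg _).trans (ha 0 (Nat.zero_le _))
  calc _ ≤ _ := hleibniz
    _ ≤ ∑ i ∈ range (n + 1), (n.choose i : ℝ) * a * b := by
        gcongr with i hi
        · exact ha i (Nat.lt_succ_iff.mp (mem_range.mp hi))
        · exact hb _ (Nat.sub_le n i)
    _ = 2 ^ n * a * b := by
        rw [← sum_mul, ← sum_mul, ← Nat.cast_sum, Nat.sum_range_choose]; push_cast; ring

section InverseBounds

variable {ψ : ℝ → ℝ} {r : ℕ} {K : ℝ}

theorem deriv_fun_inv_eq (hψ : Differentiable ℝ ψ) (hψ0 : ∀ x, ψ x ≠ 0) :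
    deriv (fun y => (ψ y)⁻¹) = fun y => -(deriv ψ y * ((ψ y)⁻¹ * (ψ y)⁻¹)) := by
  funext y
  rw [deriv_fun_inv'' (hψ y) (hψ0 y)]
  field_simp

theorem abs_iteratedDeriv_succ_inv_le {s : ℕ} (hψ : ContDiff ℝ (s + 1 : ℕ) ψ)
    (hψ0 : ∀ x, ψ x ≠ 0) {x A : ℝ} (hK : ∀ i ≤ s, |iteratedDeriv (i + 1) ψ x| ≤ K * |ψ x|)
    (hA : ∀ t ≤ s, |iteratedDeriv t (fun y => (ψ y)⁻¹) x| ≤ A * |ψ x|⁻¹) :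
    |iteratedDeriv (s + 1) (fun y => (ψ y)⁻¹) x| ≤ 4 ^ s * K * A ^ 2 * |ψ x|⁻¹ := by
  have hψ' : ContDiff ℝ s (deriv ψ) := (by exact_mod_cast hψ : ContDiff ℝ (s + 1) ψ).deriv'
  have hu : ContDiff ℝ s (fun y => (ψ y)⁻¹) :=
    (hψ.inv hψ0).of_le (by exact_mod_cast Nat.le_succ s)
  have hderiv_bound : ∀ i ≤ s, |iteratedDeriv i (deriv ψ) x| ≤ K * |ψ x| := fun i hi => by
    rw [← iteratedDeriv_succ']; exact hK i hi
  have hsq_bound : ∀ i ≤ s, |iteratedDeriv i (fun y => (ψ y)⁻¹ * (ψ y)⁻¹) x| ≤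
      2 ^ s * (A * |ψ x|⁻¹) * (A * |ψ x|⁻¹) := fun i hi => by
    have hui : ContDiff ℝ i (fun y => (ψ y)⁻¹) := hu.of_le (by exact_mod_cast hi)
    have hle : ∀ l ≤ i, |iteratedDeriv l (fun y => (ψ y)⁻¹) x| ≤ A * |ψ x|⁻¹ :=
      fun l hl => hA l (hl.trans hi)
    have hA0 : 0 ≤ A * |ψ x|⁻¹ := (abs_nonneg _).trans (hle 0 (Nat.zero_le _))
    calc _ ≤ 2 ^ i * (A * |ψ x|⁻¹) * (A * |ψ x|⁻¹) := abs_iteratedDeriv_mul_le hui hui hle hle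
      _ ≤ _ := by gcongr; exact one_le_two
  rw [iteratedDeriv_succ', deriv_fun_inv_eq (hψ.differentiable (by norm_num)) hψ0,
    iteratedDeriv_fun_neg, abs_neg]
  calc _ ≤ 2 ^ s * (K * |ψ x|) * (2 ^ s * (A * |ψ x|⁻¹) * (A * |ψ x|⁻¹)) :=
        abs_iteratedDeriv_mul_le hψ' (hu.mul hu) hderiv_bound hsq_bound
    _ = 4 ^ s * K * A ^ 2 * |ψ x|⁻¹ * (|ψ x| * |ψ x|⁻¹) := by
        rw [show (4 : ℝ) ^ s = 2 ^ s * 2 ^ s by rw [← mul_pow]; norm_num]; ring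
    _ = _ := by rw [mul_inv_cancel₀ (abs_ne_zero.mpr (hψ0 x)), mul_one]

def invDerivConst (K : ℝ) : ℕ → ℝ
  | 0 => 1
  | s + 1 => max (invDerivConst K s) (4 ^ s * K * invDerivConst K s ^ 2)

theorem one_le_invDerivConst (K : ℝ) : ∀ s, 1 ≤ invDerivConst K s
  | 0 => le_rfl
  | s + 1 => (one_le_invDerivConst K s).trans (le_max_left _ _)

theorem abs_iteratedDeriv_inv_le (hψ : ContDiff ℝ r ψ) (hψ0 : ∀ x, ψ x ≠ 0)
    (hK : ∀ m, 1 ≤ m → m ≤ r → ∀ x, |iteratedDeriv m ψ x| ≤ K * |ψ x|) :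
    ∀ s ≤ r, ∀ t ≤ s, ∀ x,
      |iteratedDeriv t (fun y => (ψ y)⁻¹) x| ≤ invDerivConst K s * |ψ x|⁻¹
  | 0, _, t, ht, x => by
    obtain rfl := Nat.le_zero.mp ht
    simp [invDerivConst, abs_inv]
  | s + 1, hs, t, ht, x => by
    have ih := abs_iteratedDeriv_inv_le hψ hψ0 hK s (by omega)
    rcases Nat.lt_or_ge t (s + 1) with ht' | ht'
    · exact (ih t (by omega) x).trans
        (mul_le_mul_of_nonneg_right (le_max_left _ _) (by positivity))
    obtain rfl : t = s + 1 := by omega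
    refine (abs_iteratedDeriv_succ_inv_le (hψ.of_le (by exact_mod_cast hs)) hψ0
      (fun i hi => hK (i + 1) (by omega) (by omega) x) (fun t ht => ih t ht x)).trans ?_
    exact mul_le_mul_of_nonneg_right (le_max_right _ _) (by positivity)

end InverseBounds

noncomputable def ibpIntegrand (ψ g : ℝ → ℝ) : ℕ → ℝ → ℝ
  | 0 => g
  | n + 1 => deriv fun y => ibpIntegrand ψ g n y * (ψ y)⁻¹

section IbpIntegrand

variable {ψ g : ℝ → ℝ} {r : ℕ} {K G : ℝ}

theorem contDiff_ibpIntegrand (hψ : ContDiff ℝ r ψ) (hψ0 : ∀ x, ψ x ≠ 0) (hg : ContDiff ℝ r g) :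
    ∀ n m, n + m ≤ r → ContDiff ℝ m (ibpIntegrand ψ g n)
  | 0, m, h => hg.of_le (by exact_mod_cast (by omega : m ≤ r))
  | n + 1, m, h => by
    have hprod : ContDiff ℝ (m + 1 : ℕ) fun y => ibpIntegrand ψ g n y * (ψ y)⁻¹ :=
      (contDiff_ibpIntegrand hψ hψ0 hg n (m + 1) (by omega)).mul
        ((hψ.inv hψ0).of_le (by exact_mod_cast (by omega : m + 1 ≤ r)))
    exact (by exact_mod_cast hprod : ContDiff ℝ (m + 1) _).deriv'

theorem abs_iteratedDeriv_ibpIntegrand_le (hψ : ContDiff ℝ r ψ) (hψ0 : ∀ x, ψ x ≠ 0)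
    (hK : ∀ m, 1 ≤ m → m ≤ r → ∀ x, |iteratedDeriv m ψ x| ≤ K * |ψ x|)
    (hg : ContDiff ℝ r g) (hG : ∀ m ≤ r, ∀ x, |iteratedDeriv m g x| ≤ G) :
    ∀ n m, n + m ≤ r → ∀ x,
      |iteratedDeriv m (ibpIntegrand ψ g n) x| ≤ G * (2 ^ r * invDerivConst K r * |ψ x|⁻¹) ^ n
  | 0, m, h, x => by simpa [ibpIntegrand] using hG m (by omega) x
  | n + 1, m, h, x => by
    set a := G * (2 ^ r * invDerivConst K r * |ψ x|⁻¹) ^ n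
    set b := invDerivConst K r * |ψ x|⁻¹
    have ha : ∀ i ≤ m + 1, |iteratedDeriv i (ibpIntegrand ψ g n) x| ≤ a := fun i hi =>
      abs_iteratedDeriv_ibpIntegrand_le hψ hψ0 hK hg hG n i (by omega) x
    have hb : ∀ i ≤ m + 1, |iteratedDeriv i (fun y => (ψ y)⁻¹) x| ≤ b := fun i hi =>
      abs_iteratedDeriv_inv_le hψ hψ0 hK r le_rfl i (by omega) x
    have ha0 : 0 ≤ a := (abs_nonneg _).trans (ha 0 (by omega))
    have hb0 : 0 ≤ b := (abs_nonneg _).trans (hb 0 (by omega))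
    change |iteratedDeriv m (deriv _) x| ≤ _
    rw [← iteratedDeriv_succ']
    calc _ ≤ 2 ^ (m + 1) * a * b :=
          abs_iteratedDeriv_mul_le (contDiff_ibpIntegrand hψ hψ0 hg n (m + 1) (by omega))
            ((hψ.inv hψ0).of_le (by exact_mod_cast (by omega : m + 1 ≤ r))) ha hb
      _ ≤ 2 ^ r * a * b := by
          gcongr
          · exact one_le_two
          · omega
      _ = _ := by ring

theorem periodic_deriv_of_add_const {f : ℝ → ℝ} {T c : ℝ} (hf : ∀ x, f (x + T) = f x + c) :
    Function.Periodic (deriv f) T := fun x => by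
  rw [← deriv_comp_add_const, funext hf, deriv_add_const]

theorem periodic_ibpIntegrand {T : ℝ} (hgT : Function.Periodic g T)
    (hψT : Function.Periodic ψ T) : ∀ n, Function.Periodic (ibpIntegrand ψ g n) T
  | 0 => hgT
  | n + 1 => periodic_deriv_of_add_const (c := 0) fun x => by
      simp [periodic_ibpIntegrand hgT hψT n x, hψT x]

end IbpIntegrand

section NonstationaryPhase

open Complex

theorem integral_mul_cexp_eq_I_mul_integral {φ ψ w : ℝ → ℝ} {a b : ℝ}
    (hφ : ∀ x, HasDerivAt φ (ψ x) x) (hψ0 : ∀ x, ψ x ≠ 0) (hw : Continuous w)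
    (hW : ContDiff ℝ 1 fun y => w y * (ψ y)⁻¹) (hWab : w b * (ψ b)⁻¹ = w a * (ψ a)⁻¹)
    (hφab : cexp (I * φ b) = cexp (I * φ a)) :
    ∫ x in a..b, (w x : ℂ) * cexp (I * φ x) =
      I * ∫ x in a..b, ((deriv (fun y => w y * (ψ y)⁻¹) x : ℝ) : ℂ) * cexp (I * φ x) := by
  set W : ℝ → ℝ := fun y => w y * (ψ y)⁻¹
  set E : ℝ → ℂ := fun x => cexp (I * φ x)
  -- `-I W E` is a primitive of `w E - I W' E`, and it takes the same value at `a` and `b`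
  have hprim : ∀ x, HasDerivAt (fun y => -I * W y * E y)
      ((w x : ℂ) * E x - I * ((deriv W x : ℝ) : ℂ) * E x) x := fun x => by
    have hWx : HasDerivAt (fun y => (W y : ℂ)) ((deriv W x : ℝ) : ℂ) x :=
      ((hW.differentiable one_ne_zero) x).hasDerivAt.ofReal_comp
    have hwψ : (W x : ℂ) * ψ x = w x := by
      simp only [W]; push_cast; field_simp [ofReal_ne_zero.mpr (hψ0 x)]
    refine ((hWx.const_mul (-I)).fun_mul ((hφ x).ofReal_comp.const_mul I).cexp).congr_deriv ?_
    linear_combination (E x) * hwψ - ((W x : ℂ) * ψ x * E x) * I_mul_I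
  have hEcont : Continuous E :=
    continuous_exp.comp (continuous_const.mul
      (continuous_ofReal.comp (continuous_iff_continuousAt.mpr fun x => (hφ x).continuousAt)))
  have hint₁ : IntervalIntegrable (fun x => (w x : ℂ) * E x) MeasureTheory.volume a b :=
    ((continuous_ofReal.comp hw).mul hEcont).intervalIntegrable a b
  have hint₂ :
      IntervalIntegrable (fun x => I * ((deriv W x : ℝ) : ℂ) * E x) MeasureTheory.volume a b :=
    ((continuous_const.mul (continuous_ofReal.comp (hW.continuous_deriv le_rfl))).mul
      hEcont).intervalIntegrable a b
  have hFTC := intervalIntegral.integral_eq_sub_of_hasDerivAt (fun x _ => hprim x) (hint₁.sub hint₂)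
  rw [intervalIntegral.integral_sub hint₁ hint₂] at hFTC
  simp only [W, E, hWab, hφab, sub_self] at hFTC
  rw [sub_eq_zero.mp hFTC, ← intervalIntegral.integral_const_mul]
  simp only [mul_assoc]
  rfl

theorem integral_mul_cexp_eq_I_pow_mul_integral_ibpIntegrand {φ ψ g : ℝ → ℝ} {r : ℕ} {T : ℝ}
    (hφ : ∀ x, HasDerivAt φ (ψ x) x) (hψ : ContDiff ℝ r ψ) (hψ0 : ∀ x, ψ x ≠ 0)
    (hg : ContDiff ℝ r g) (hgT : Function.Periodic g T) (hψT : Function.Periodic ψ T)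
    (hφT : cexp (I * φ T) = cexp (I * φ 0)) :
    ∀ n ≤ r, ∫ x in 0..T, (g x : ℂ) * cexp (I * φ x) =
      I ^ n * ∫ x in 0..T, (ibpIntegrand ψ g n x : ℂ) * cexp (I * φ x)
  | 0, _ => by simp [ibpIntegrand]
  | n + 1, hn => by
    have hWT : ibpIntegrand ψ g n T * (ψ T)⁻¹ = ibpIntegrand ψ g n 0 * (ψ 0)⁻¹ := by
      rw [← zero_add T, periodic_ibpIntegrand hgT hψT n 0, hψT 0]
    have hW : ContDiff ℝ (1 : ℕ) fun y => ibpIntegrand ψ g n y * (ψ y)⁻¹ :=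
      (contDiff_ibpIntegrand hψ hψ0 hg n 1 hn).mul
        ((hψ.inv hψ0).of_le (by exact_mod_cast (by omega : 1 ≤ r)))
    rw [integral_mul_cexp_eq_I_pow_mul_integral_ibpIntegrand hφ hψ hψ0 hg hgT hψT hφT n (by omega),
      integral_mul_cexp_eq_I_mul_integral hφ hψ0
        (contDiff_ibpIntegrand hψ hψ0 hg n 0 (by omega)).continuous
        (by exact_mod_cast hW) hWT hφT, pow_succ, mul_assoc]
    rfl

theorem norm_integral_ofReal_mul_cexp_le {h φ : ℝ → ℝ} {T M : ℝ} (hT : 0 ≤ T)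
    (hM : ∀ x, |h x| ≤ M) : ‖∫ x in 0..T, (h x : ℂ) * cexp (I * φ x)‖ ≤ T * M := by
  have := intervalIntegral.norm_integral_le_of_norm_le_const (a := 0) (b := T) (C := M)
    (f := fun x => (h x : ℂ) * cexp (I * φ x)) fun x _ => by
      rw [norm_mul, norm_exp_I_mul_ofReal, mul_one, norm_real, Real.norm_eq_abs]
      exact hM x
  rwa [sub_zero, abs_of_nonneg hT, mul_comm] at this

theorem norm_integral_mul_cexp_le_of_le_abs_deriv {φ ψ g : ℝ → ℝ} {r : ℕ} {T K G D : ℝ}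
    (hT : 0 ≤ T) (hφ : ∀ x, HasDerivAt φ (ψ x) x) (hψ : ContDiff ℝ r ψ)
    (hK : ∀ m, 1 ≤ m → m ≤ r → ∀ x, |iteratedDeriv m ψ x| ≤ K * |ψ x|)
    (hD : 0 < D) (hDψ : ∀ x, D ≤ |ψ x|)
    (hg : ContDiff ℝ r g) (hG : ∀ m ≤ r, ∀ x, |iteratedDeriv m g x| ≤ G)
    (hgT : Function.Periodic g T) (hψT : Function.Periodic ψ T)
    (hφT : cexp (I * φ T) = cexp (I * φ 0)) :
    ‖∫ x in 0..T, (g x : ℂ) * cexp (I * φ x)‖ ≤ T * (G * (2 ^ r * invDerivConst K r / D) ^ r) := by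
  have hψ0 : ∀ x, ψ x ≠ 0 := fun x => abs_pos.mp (hD.trans_le (hDψ x))
  rw [integral_mul_cexp_eq_I_pow_mul_integral_ibpIntegrand hφ hψ hψ0 hg hgT hψT hφT r le_rfl,
    norm_mul, norm_pow, norm_I, one_pow, one_mul]
  refine norm_integral_ofReal_mul_cexp_le hT fun x => ?_
  have hbound := abs_iteratedDeriv_ibpIntegrand_le hψ hψ0 hK hg hG r 0 (by omega) x
  rw [iteratedDeriv_zero] at hbound
  have hG0 : 0 ≤ G := (abs_nonneg _).trans (hG 0 (Nat.zero_le r) 0)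
  have hA : 0 ≤ invDerivConst K r := zero_le_one.trans (one_le_invDerivConst K r)
  refine hbound.trans ?_
  rw [div_eq_mul_inv]
  gcongr
  exact hDψ x

end NonstationaryPhase

theorem abs_sub_eq_abs_add_abs_of_mul_nonpos {a b : ℝ} (h : a * b ≤ 0) :
    |a - b| = |a| + |b| := by
  have hsq : (|a| + |b|) ^ 2 = (a - b) ^ 2 := by
    rw [add_sq, sq_abs, sq_abs, mul_assoc, ← abs_mul, abs_of_nonpos h]; ring
  rw [← abs_of_nonneg (by positivity : 0 ≤ |a| + |b|)]
  exact ((sq_eq_sq_iff_abs_eq_abs _ _).mp hsq).symm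

theorem add_abs_le_abs_mul_sub {a p δ j k : ℝ} (hδ : δ ≤ |a - p|)
    (hsign : (a - p) * (k * (j - p * k)) ≤ 0) : δ * |k| + |j - p * k| ≤ |k * a - j| := by
  rw [show k * a - j = k * (a - p) - (j - p * k) by ring,
    abs_sub_eq_abs_add_abs_of_mul_nonpos (a := k * (a - p)) (b := j - p * k) (by linarith),
    abs_mul, mul_comm δ]
  gcongr

theorem mul_sub_nonneg_of_lt_div {p j k : ℝ} (h : k = 0 ∨ p < j / k) : 0 ≤ k * (j - p * k) := by
  rcases h with rfl | h
  · simp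
  · rcases eq_or_ne k 0 with rfl | hk
    · simp
    · have : k * (j - p * k) = k ^ 2 * (j / k - p) := by field_simp
      rw [this]; exact mul_nonneg (sq_nonneg k) (by linarith)

theorem mul_sub_nonpos_of_div_lt {p j k : ℝ} (h : k = 0 ∨ j / k < p) : k * (j - p * k) ≤ 0 := by
  rcases h with rfl | h
  · simp
  · rcases eq_or_ne k 0 with rfl | hk
    · simp
    · have : k * (j - p * k) = k ^ 2 * (j / k - p) := by field_simp
      rw [this]; exact mul_nonpos_of_nonneg_of_nonpos (sq_nonneg k) (by linarith)

theorem half_min_mul_one_add_abs_le {p δ : ℝ} (hδ : 0 < δ) {j k : ℤ} (hjk : (j, k) ≠ 0) :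
    min δ 1 / 2 * (1 + |(j : ℝ) - p * k|) ≤ δ * |(k : ℝ)| + |(j : ℝ) - p * k| := by
  have hmin₁ := min_le_left δ 1
  have hmin₂ := min_le_right δ 1
  have habs := abs_nonneg ((j : ℝ) - p * k)
  rcases eq_or_ne k 0 with rfl | hk
  · have hj : (1 : ℝ) ≤ |(j : ℝ)| := by
      have : j ≠ 0 := fun hj => hjk (by simp [hj])
      exact_mod_cast Int.one_le_abs this
    simp only [Int.cast_zero, mul_zero, sub_zero, abs_zero] at habs ⊢
    nlinarith
  · have hk : (1 : ℝ) ≤ |(k : ℝ)| := by exact_mod_cast Int.one_le_abs hk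
    nlinarith

theorem iteratedDeriv_const_mul_sub_const {f : ℝ → ℝ} {m : ℕ} (hm : 1 ≤ m) (c d x : ℝ) :
    iteratedDeriv m (fun y => c * f y - d) x = c * iteratedDeriv m f x := by
  obtain ⟨m, rfl⟩ := Nat.exists_eq_add_of_le' hm
  rw [iteratedDeriv_succ', iteratedDeriv_succ', deriv_sub_const_fun, deriv_const_mul_field',
    iteratedDeriv_const_mul_field]

noncomputable def transferEntry (β : ℕ) (v : ℝ → ℝ) (j k : ℤ) : ℂ :=
  (1 / (2 * Real.pi) : ℂ) * ∫ x in (0 : ℝ)..(2 * Real.pi * β),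
    ((deriv v x : ℝ) : ℂ) * Complex.exp (Complex.I * ((↑k * v x - ↑j * x : ℝ) : ℂ))

section Lift

open Complex

variable {β r : ℕ} {v : ℝ → ℝ}

theorem norm_transferEntry_le {j k : ℤ} {M : ℝ}
    (h : ‖∫ x in (0 : ℝ)..(2 * Real.pi * β),
      ((deriv v x : ℝ) : ℂ) * cexp (I * ((↑k * v x - ↑j * x : ℝ) : ℂ))‖ ≤ 2 * Real.pi * β * M) :
    ‖transferEntry β v j k‖ ≤ β * M := by
  rw [transferEntry, norm_mul, show (1 / (2 * Real.pi) : ℂ) = ((1 / (2 * Real.pi) : ℝ) : ℂ) by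
    push_cast; ring, norm_real, Real.norm_of_nonneg (by positivity)]
  calc _ ≤ 1 / (2 * Real.pi) * (2 * Real.pi * β * M) := by gcongr
    _ = β * M := by field_simp

theorem cexp_phase_eq_of_lift (hlift : ∀ x, v (x + 2 * Real.pi * β) = v x + 2 * Real.pi) (j k : ℤ) :
    cexp (I * ((k * v (2 * Real.pi * β) - j * (2 * Real.pi * β) : ℝ) : ℂ)) =
      cexp (I * ((k * v 0 - j * 0 : ℝ) : ℂ)) := by
  have hv := hlift 0
  rw [zero_add] at hv
  rw [hv, show I * ((k * (v 0 + 2 * Real.pi) - j * (2 * Real.pi * β) : ℝ) : ℂ) =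
      I * ((k * v 0 - j * 0 : ℝ) : ℂ) + ((k - β * j : ℤ) : ℂ) * (2 * Real.pi * I) by
    push_cast; ring, exp_add, exp_int_mul_two_pi_mul_I, mul_one]

theorem abs_iteratedDeriv_deriv_le {C : ℕ → ℝ} {Λ : ℝ} (hΛ : ∀ x, |deriv v x| ≤ Λ)
    (hC : ∀ n, 1 ≤ n → n ≤ r → ∀ x : ℝ, |iteratedDeriv (n + 1) v x| ≤ C n * |deriv v x|) :
    ∀ m ≤ r, ∀ x, |iteratedDeriv m (deriv v) x| ≤ Λ * (1 + ∑ n ∈ range (r + 1), |C n|) := by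
  intro m hm x
  have hΛ0 : 0 ≤ Λ := (abs_nonneg _).trans (hΛ x)
  have hsum : 0 ≤ ∑ n ∈ range (r + 1), |C n| := sum_nonneg fun n _ => abs_nonneg (C n)
  rcases Nat.eq_zero_or_pos m with rfl | hm₁
  · rw [iteratedDeriv_zero]; nlinarith [hΛ x]
  · have hCm : |C m| ≤ ∑ n ∈ range (r + 1), |C n| :=
      single_le_sum (fun n _ => abs_nonneg (C n)) (mem_range.mpr (by omega))
    rw [← iteratedDeriv_succ']
    calc _ ≤ C m * |deriv v x| := hC m hm₁ hm x
      _ ≤ |C m| * Λ := (mul_le_mul_of_nonneg_right (le_abs_self _) (abs_nonneg _)).trans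
          (mul_le_mul_of_nonneg_left (hΛ x) (abs_nonneg _))
      _ ≤ _ := by nlinarith

theorem norm_transferEntry_le_of_le_abs {G δ D : ℝ} (hv : ContDiff ℝ (r + 1 : ℕ) v)
    (hlift : ∀ x, v (x + 2 * Real.pi * β) = v x + 2 * Real.pi)
    (hG : ∀ m ≤ r, ∀ x, |iteratedDeriv m (deriv v) x| ≤ G) (hδ : 0 < δ) (hD : 0 < D) {j k : ℤ}
    (hk : ∀ x, δ * |(k : ℝ)| ≤ |k * deriv v x - j|) (hDψ : ∀ x, D ≤ |k * deriv v x - j|) :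
    ‖transferEntry β v j k‖ ≤ β * (G * (2 ^ r * invDerivConst (G / δ) r / D) ^ r) := by
  set ψ := fun x => (k : ℝ) * deriv v x - j
  have hdv : ContDiff ℝ r (deriv v) := (by exact_mod_cast hv : ContDiff ℝ (r + 1) v).deriv'
  have hper : Function.Periodic (deriv v) (2 * Real.pi * β) := periodic_deriv_of_add_const hlift
  have hK : ∀ m, 1 ≤ m → m ≤ r → ∀ x, |iteratedDeriv m ψ x| ≤ G / δ * |ψ x| := by
    intro m hm₁ hmr x
    rw [iteratedDeriv_const_mul_sub_const hm₁, abs_mul]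
    calc _ ≤ |(k : ℝ)| * G := by gcongr; exact hG m hmr x
      _ = G / δ * (δ * |(k : ℝ)|) := by field_simp
      _ ≤ G / δ * |ψ x| := by
          have hG0 : 0 ≤ G := (abs_nonneg _).trans (hG 0 (Nat.zero_le _) x)
          gcongr; exact hk x
  have hφ : ∀ x, HasDerivAt (fun x => (k : ℝ) * v x - j * x) (ψ x) x := fun x => by
    have hvx := ((hv.differentiable (by norm_num)) x).hasDerivAt
    simpa [ψ] using (hvx.const_mul (k : ℝ)).fun_sub ((hasDerivAt_id x).const_mul (j : ℝ))
  exact norm_transferEntry_le (norm_integral_mul_cexp_le_of_le_abs_deriv (by positivity) hφ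
    ((contDiff_const.mul hdv).sub contDiff_const) hK hD hDψ hdv hG hper
    (fun x => by simp only [ψ, hper x]) (cexp_phase_eq_of_lift hlift j k))

theorem exists_norm_transferEntry_le {C : ℕ → ℝ} {Λ : ℝ} (hv : ContDiff ℝ (r + 1 : ℕ) v)
    (hlift : ∀ x, v (x + 2 * Real.pi * β) = v x + 2 * Real.pi) (hΛ : ∀ x, |deriv v x| ≤ Λ)
    (hC : ∀ n, 1 ≤ n → n ≤ r → ∀ x : ℝ, |iteratedDeriv (n + 1) v x| ≤ C n * |deriv v x|)
    {p δ : ℝ} (hδ : 0 < δ) :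
    ∃ Cb > (0 : ℝ), ∀ j k : ℤ, (∀ x, δ * |(k : ℝ)| + |(j : ℝ) - p * k| ≤ |k * deriv v x - j|) →
      ‖transferEntry β v j k‖ ≤ Cb / (1 + |(j : ℝ) - p * k|) ^ r := by
  set G := Λ * (1 + ∑ n ∈ range (r + 1), |C n|)
  have hG := abs_iteratedDeriv_deriv_le hΛ hC
  have hβG : 0 ≤ (β : ℝ) * G :=
    mul_nonneg (Nat.cast_nonneg β) ((abs_nonneg _).trans (hG 0 (Nat.zero_le _) 0))
  set c := min δ 1 / 2
  have hc : 0 < c := half_pos (lt_min hδ one_pos)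
  set A := 2 ^ r * invDerivConst (G / δ) r
  have hAc : 0 ≤ (A / c) ^ r := by have := one_le_invDerivConst (G / δ) r; positivity
  refine ⟨β * G * ((A / c) ^ r + 1) + 1, by positivity, fun j k hsep => ?_⟩
  rcases eq_or_ne (j, k) 0 with hjk | hjk
  · obtain ⟨rfl, rfl⟩ := Prod.mk_eq_zero.mp hjk
    have hentry : ‖transferEntry β v 0 0‖ ≤ β * G :=
      norm_transferEntry_le (norm_integral_ofReal_mul_cexp_le (by positivity) fun x => by
        simpa using hG 0 (Nat.zero_le _) x)
    simp only [Int.cast_zero, mul_zero, sub_zero, abs_zero, add_zero, one_pow, div_one]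
    nlinarith [mul_nonneg hβG hAc]
  · set D := c * (1 + |(j : ℝ) - p * k|)
    calc ‖transferEntry β v j k‖ ≤ β * (G * (A / D) ^ r) :=
          norm_transferEntry_le_of_le_abs hv hlift hG hδ (by positivity)
            (fun x => (le_add_of_nonneg_right (abs_nonneg _)).trans (hsep x))
            (fun x => (half_min_mul_one_add_abs_le hδ hjk).trans (hsep x))
      _ = β * G * (A / c) ^ r / (1 + |(j : ℝ) - p * k|) ^ r := by
          simp only [D, div_pow, mul_pow]; field_simp
      _ ≤ _ := by gcongr; linarith

end Lift

theorem transfer_entry_bound_periodic_differentiable_general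
    (β r : ℕ)
    (lam₁ lam₂ : ℝ)
    (v : ℝ → ℝ) (hv : ContDiff ℝ (r + 1 : ℕ) v)
    (hlift : ∀ x : ℝ, v (x + 2 * Real.pi * β) = v x + 2 * Real.pi)
    (hd₂ : ∀ x : ℝ, lam₂⁻¹ ≤ deriv v x) (hd₁ : ∀ x : ℝ, deriv v x ≤ lam₁⁻¹)
    (C : ℕ → ℝ)
    (hC : ∀ n, 1 ≤ n → n ≤ r → ∀ x : ℝ,
      |iteratedDeriv (n + 1) v x| ≤ C n * |deriv v x|) :
    (∀ p₁ : ℝ, lam₁⁻¹ < p₁ → ∃ Cb > (0 : ℝ), ∀ j k : ℤ,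
      (k = 0 ∨ p₁ < (j : ℝ) / (k : ℝ)) →
      ‖(1 / (2 * Real.pi) : ℂ) * ∫ x in (0 : ℝ)..(2 * Real.pi * β),
          ((deriv v x : ℝ) : ℂ) * Complex.exp (Complex.I * ((↑k * v x - ↑j * x : ℝ) : ℂ))‖ ≤
        Cb / (1 + |(j : ℝ) - p₁ * (k : ℝ)|) ^ r) ∧
    (∀ p₂ : ℝ, 0 < p₂ → p₂ < lam₂⁻¹ → ∃ Cb > (0 : ℝ), ∀ j k : ℤ,
      (k = 0 ∨ (j : ℝ) / (k : ℝ) < p₂) →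
      ‖(1 / (2 * Real.pi) : ℂ) * ∫ x in (0 : ℝ)..(2 * Real.pi * β),
          ((deriv v x : ℝ) : ℂ) * Complex.exp (Complex.I * ((↑k * v x - ↑j * x : ℝ) : ℂ))‖ ≤
        Cb / (1 + |(j : ℝ) - p₂ * (k : ℝ)|) ^ r) := by
  have hΛ : ∀ x, |deriv v x| ≤ max |lam₂⁻¹| |lam₁⁻¹| := fun x =>
    abs_le_max_abs_abs (hd₂ x) (hd₁ x)
  constructor
  · intro p₁ hp₁
    obtain ⟨Cb, hCb, hbound⟩ :=
      exists_norm_transferEntry_le (β := β) (p := p₁) hv hlift hΛ hC (sub_pos.mpr hp₁)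
    refine ⟨Cb, hCb, fun j k hjk => hbound j k fun x => add_abs_le_abs_mul_sub ?_ ?_⟩
    · exact le_abs.mpr (Or.inr (by linarith [hd₁ x]))
    · exact mul_nonpos_of_nonpos_of_nonneg (by linarith [hd₁ x])
        (mul_sub_nonneg_of_lt_div (hjk.imp_left fun hk => by simp [hk]))
  · intro p₂ _ hp₂
    obtain ⟨Cb, hCb, hbound⟩ :=
      exists_norm_transferEntry_le (β := β) (p := p₂) hv hlift hΛ hC (sub_pos.mpr hp₂)
    refine ⟨Cb, hCb, fun j k hjk => hbound j k fun x => add_abs_le_abs_mul_sub ?_ ?_⟩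
    · exact le_abs.mpr (Or.inl (by linarith [hd₂ x]))
    · exact mul_nonpos_of_nonneg_of_nonpos (by linarith [hd₂ x])
        (mul_sub_nonpos_of_div_lt (hjk.imp_left fun hk => by simp [hk]))

/-- Polynomial decay of the Fourier-basis transfer operator matrix
`L_{jk} = (1/2π) ∫₀^{2πβ} v'(x) e^{i(k v(x) - j x)} dx` of a uniformly expanding circle map
satisfying the generalized distortion condition (DD_r). -/
theorem transfer_entry_bound_periodic_differentiable
    (β r : ℕ) (hβ : 0 < β) (hr : 1 ≤ r)
    (lam₁ lam₂ : ℝ) (hlam₁ : 0 < lam₁) (hlam : lam₁ ≤ lam₂)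
    (v : ℝ → ℝ) (hv : ContDiff ℝ (r + 1 : ℕ) v)
    (hlift : ∀ x : ℝ, v (x + 2 * Real.pi * β) = v x + 2 * Real.pi)
    (hd₂ : ∀ x : ℝ, lam₂⁻¹ ≤ deriv v x) (hd₁ : ∀ x : ℝ, deriv v x ≤ lam₁⁻¹)
    (C : ℕ → ℝ)
    (hC : ∀ n, 1 ≤ n → n ≤ r → ∀ x : ℝ,
      |iteratedDeriv (n + 1) v x| ≤ C n * |deriv v x|) :
    (∀ p₁ : ℝ, lam₁⁻¹ < p₁ → ∃ Cb > (0 : ℝ), ∀ j k : ℤ,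
      (k = 0 ∨ p₁ < (j : ℝ) / (k : ℝ)) →
      ‖(1 / (2 * Real.pi) : ℂ) * ∫ x in (0 : ℝ)..(2 * Real.pi * β),
          ((deriv v x : ℝ) : ℂ) * Complex.exp (Complex.I * ((↑k * v x - ↑j * x : ℝ) : ℂ))‖ ≤
        Cb / (1 + |(j : ℝ) - p₁ * (k : ℝ)|) ^ r) ∧
    (∀ p₂ : ℝ, 0 < p₂ → p₂ < lam₂⁻¹ → ∃ Cb > (0 : ℝ), ∀ j k : ℤ,
      (k = 0 ∨ (j : ℝ) / (k : ℝ) < p₂) →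
      ‖(1 / (2 * Real.pi) : ℂ) * ∫ x in (0 : ℝ)..(2 * Real.pi * β),
          ((deriv v x : ℝ) : ℂ) * Complex.exp (Complex.I * ((↑k * v x - ↑j * x : ℝ) : ℂ))‖ ≤
        Cb / (1 + |(j : ℝ) - p₂ * (k : ℝ)|) ^ r) :=
  transfer_entry_bound_periodic_differentiable_general β r lam₁ lam₂ v hv hlift hd₂ hd₁ C hC
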